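/- arXiv:2302.11476 — 7 statements merged into one kernel-verified Lean document; each statement's English description precedes it below -/
import Mathlib

section
/- The deterministic communication complexity of any promise injection problem (I,P) equals ⌈log₂ χ(I,P)⌉, where χ is the chromatic number of the associated colored tensor. In particular, a proper coloring of (I,P) with k colors yields a correct deterministic protocol using ⌈log₂ k⌉ bits, and conversely a correct protocol with c bits of communication yields a proper coloring with 2^c colors. -/
open Set

def proj1 {A B C : Type} (S : Set (A × B × C)) : Set A := Prod.fst '' S
def proj2 {A B C : Type} (S : Set (A × B × C)) : Set B := (fun t => t.2.1) '' S
def proj3 {A B C : Type} (S : Set (A × B × C)) : Set C := (fun t => t.2.2) '' S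

def IsPartialPerm {A B C : Type} (S : Set (A × B × C)) : Prop :=
  ∀ t ∈ S, ∀ t' ∈ S, (t.1 = t'.1 ∨ t.2.1 = t'.2.1 ∨ t.2.2 = t'.2.2) → t = t'

def IsIndep {A B C : Type} (I P S : Set (A × B × C)) : Prop :=
  S ⊆ I ∧ IsPartialPerm S ∧ P ∩ (proj1 S ×ˢ (proj2 S ×ˢ proj3 S)) = S

noncomputable def chromatic {A B C : Type} (I P : Set (A × B × C)) : ℕ :=
  sInf {k : ℕ | ∃ f : A × B × C → Fin k, ∀ m : Fin k, IsIndep I P (I ∩ f ⁻¹' {m})}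

/-- A correct deterministic protocol for the promise problem `(I, P)` with transcript
set `M`: the transcript function `tr` has combinatorial cubes as fibers (each player's
messages depend only on their own input and the blackboard), each player accepts
based on their own input and the final transcript, and an input in `P` is in `I`
iff all three players accept. -/
def IsProtocol {V : Type} (I P : Set (V × V × V)) (M : Type) (tr : V × V × V → M)
    (acc1 acc2 acc3 : V → M → Prop) : Prop :=
  (∀ m : M, ∃ X Y Z : Set V, tr ⁻¹' {m} = X ×ˢ (Y ×ˢ Z)) ∧
  ∀ t ∈ P, (t ∈ I ↔ acc1 t.1 (tr t) ∧ acc2 t.2.1 (tr t) ∧ acc3 t.2.2 (tr t))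

/-- Deterministic communication complexity of the promise problem `(I, P)`:
the least number of bits `c` so that a correct protocol with `2^c` transcripts exists. -/
noncomputable def cc {V : Type} (I P : Set (V × V × V)) : ℕ :=
  sInf {c : ℕ | ∃ (tr : V × V × V → Fin (2 ^ c)) (acc1 acc2 acc3 : V → Fin (2 ^ c) → Prop),
    IsProtocol I P (Fin (2 ^ c)) tr acc1 acc2 acc3}


lemma indep_of_subsingleton {A B C : Type} {I P S : Set (A × B × C)} (hIP : I ⊆ P)
    (hS : S ⊆ I) (hss : S.Subsingleton) : IsIndep I P S := by
  refine ⟨hS, fun t ht t' ht' _ => hss ht ht', ?_⟩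
  ext x
  constructor
  · rintro ⟨hxP, ⟨u, hu, hu1⟩, ⟨v, hv, hv1⟩, ⟨w, hw, hw1⟩⟩
    have hvu : v = u := hss hv hu
    have hwu : w = u := hss hw hu
    have hx : x = u := by
      have h2 : x.2 = u.2 := Prod.ext (by rw [← hv1, hvu]) (by rw [← hw1, hwu])
      exact Prod.ext hu1.symm h2
    rwa [hx]
  · intro hx
    refine ⟨hIP (hS hx), ⟨x, hx, rfl⟩, ⟨x, hx, rfl⟩, ⟨x, hx, rfl⟩⟩

lemma chromSet_nonempty {V : Type} [Fintype V] (I P : Set (V × V × V)) (hIP : I ⊆ P) :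
    {k : ℕ | ∃ f : V × V × V → Fin k, ∀ m : Fin k, IsIndep I P (I ∩ f ⁻¹' {m})}.Nonempty := by
  classical
  refine ⟨Fintype.card (V × V × V), (Fintype.equivFin (V × V × V) : _ → _), fun m => ?_⟩
  refine indep_of_subsingleton hIP Set.inter_subset_left ?_
  intro a ha b hb
  have : a = b := by
    have h1 : (Fintype.equivFin (V × V × V)) a = m := ha.2
    have h2 : (Fintype.equivFin (V × V × V)) b = m := hb.2
    exact (Fintype.equivFin (V × V × V)).injective (h1.trans h2.symm)
  exact this

/-- From a proper coloring with `k ≤ N` colors, build a protocol with `Fin N` transcripts. -/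
lemma protocol_of_coloring {V : Type} (I P : Set (V × V × V)) (hIP : I ⊆ P)
    (hinj : IsPartialPerm I) {k N : ℕ} (hkN : k ≤ N) (hN : 0 < N)
    (f : V × V × V → Fin k) (hf : ∀ m : Fin k, IsIndep I P (I ∩ f ⁻¹' {m})) :
    ∃ (tr : V × V × V → Fin N) (acc1 acc2 acc3 : V → Fin N → Prop),
      IsProtocol I P (Fin N) tr acc1 acc2 acc3 := by
  classical
  set emb : Fin k → Fin N := Fin.castLE hkN with hemb
  set g : V → Fin N := fun a =>
    if h : ∃ t ∈ I, t.1 = a then emb (f h.choose) else ⟨0, hN⟩ with hg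
  refine ⟨fun t => g t.1,
    (fun a m => ∃ t ∈ I, t.1 = a ∧ emb (f t) = m),
    (fun b m => ∃ t ∈ I, t.2.1 = b ∧ emb (f t) = m),
    (fun c m => ∃ t ∈ I, t.2.2 = c ∧ emb (f t) = m), ?_, ?_⟩
  · intro m
    refine ⟨g ⁻¹' {m}, Set.univ, Set.univ, ?_⟩
    ext ⟨a, b, c⟩
    simp [Set.mem_prod]
  · intro t htP
    constructor
    · intro htI
      have hex : ∃ u ∈ I, u.1 = t.1 := ⟨t, htI, rfl⟩
      have hch : hex.choose = t := by
        obtain ⟨hcI, hc1⟩ := hex.choose_spec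
        exact hinj _ hcI t htI (Or.inl hc1)
      have htr : g t.1 = emb (f t) := by
        rw [hg]; simp only [dif_pos hex, hch]
      exact ⟨⟨t, htI, rfl, htr.symm⟩, ⟨t, htI, rfl, htr.symm⟩, ⟨t, htI, rfl, htr.symm⟩⟩
    · rintro ⟨⟨u, huI, hu1, hum⟩, ⟨v, hvI, hv1, hvm⟩, ⟨w, hwI, hw1, hwm⟩⟩
      have hembinj : Function.Injective emb := Fin.castLE_injective hkN
      have hfvu : f v = f u := hembinj (hvm.trans hum.symm)
      have hfwu : f w = f u := hembinj (hwm.trans hum.symm)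
      obtain ⟨hfsub, _, hcube⟩ := hf (f u)
      have ht : t ∈ P ∩ (proj1 (I ∩ f ⁻¹' {f u}) ×ˢ
          (proj2 (I ∩ f ⁻¹' {f u}) ×ˢ proj3 (I ∩ f ⁻¹' {f u}))) := by
        refine ⟨htP, ⟨u, ⟨huI, rfl⟩, hu1⟩, ⟨v, ⟨hvI, hfvu⟩, hv1⟩, ⟨w, ⟨hwI, hfwu⟩, hw1⟩⟩
      have := hcube ▸ ht
      exact this.1

/-- From a protocol with cube fibers, every transcript class is independent. -/
lemma coloring_of_protocol {V : Type} (I P : Set (V × V × V)) (hIP : I ⊆ P)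
    (hinj : IsPartialPerm I) {M : Type} (tr : V × V × V → M)
    (acc1 acc2 acc3 : V → M → Prop)
    (hpr : IsProtocol I P M tr acc1 acc2 acc3) (m : M) :
    IsIndep I P (I ∩ tr ⁻¹' {m}) := by
  obtain ⟨hcube, hcorr⟩ := hpr
  refine ⟨Set.inter_subset_left,
    fun t ht t' ht' h => hinj t ht.1 t' ht'.1 h, ?_⟩
  ext t
  constructor
  · rintro ⟨htP, ⟨u, ⟨huI, hum⟩, hu1⟩, ⟨v, ⟨hvI, hvm⟩, hv1⟩, ⟨w, ⟨hwI, hwm⟩, hw1⟩⟩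
    obtain ⟨X, Y, Z, hXYZ⟩ := hcube m
    have huX : u.1 ∈ X := ((hXYZ ▸ (hum : u ∈ tr ⁻¹' {m})) : u ∈ X ×ˢ (Y ×ˢ Z)).1
    have hvY : v.2.1 ∈ Y := ((hXYZ ▸ (hvm : v ∈ tr ⁻¹' {m})) : v ∈ X ×ˢ (Y ×ˢ Z)).2.1
    have hwZ : w.2.2 ∈ Z := ((hXYZ ▸ (hwm : w ∈ tr ⁻¹' {m})) : w ∈ X ×ˢ (Y ×ˢ Z)).2.2
    have htm : t ∈ tr ⁻¹' {m} := by
      rw [hXYZ]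
      exact ⟨hu1 ▸ huX, hv1 ▸ hvY, hw1 ▸ hwZ⟩
    have hacc1 : acc1 t.1 m := by
      have := ((hcorr u (hIP huI)).mp huI).1
      rwa [(hum : tr u = m), hu1] at this
    have hacc2 : acc2 t.2.1 m := by
      have := ((hcorr v (hIP hvI)).mp hvI).2.1
      rwa [(hvm : tr v = m), show v.2.1 = t.2.1 from hv1] at this
    have hacc3 : acc3 t.2.2 m := by
      have := ((hcorr w (hIP hwI)).mp hwI).2.2
      rwa [(hwm : tr w = m), show w.2.2 = t.2.2 from hw1] at this
    have htI : t ∈ I := by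
      refine (hcorr t htP).mpr ?_
      rw [(htm : tr t = m)]
      exact ⟨hacc1, hacc2, hacc3⟩
    exact ⟨htI, htm⟩
  · rintro ⟨htI, htm⟩
    exact ⟨hIP htI, ⟨t, ⟨htI, htm⟩, rfl⟩, ⟨t, ⟨htI, htm⟩, rfl⟩, ⟨t, ⟨htI, htm⟩, rfl⟩⟩

/-- The deterministic communication complexity of a promise injection problem equals
`⌈log₂ χ(I,P)⌉`. -/
theorem cc_eq_clog_chromatic {V : Type} [Fintype V]
    (I P : Set (V × V × V)) (hIP : I ⊆ P) (hinj : IsPartialPerm I) :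
    cc I P = Nat.clog 2 (chromatic I P) := by
  classical
  have hCS := chromSet_nonempty I P hIP
  have hχmem : chromatic I P ∈
      {k : ℕ | ∃ f : V × V × V → Fin k, ∀ m : Fin k, IsIndep I P (I ∩ f ⁻¹' {m})} :=
    Nat.sInf_mem hCS
  obtain ⟨f, hf⟩ := hχmem
  -- upper bound: the clog is in the cc set
  have hccmem : Nat.clog 2 (chromatic I P) ∈
      {c : ℕ | ∃ (tr : V × V × V → Fin (2 ^ c)) (acc1 acc2 acc3 : V → Fin (2 ^ c) → Prop),
        IsProtocol I P (Fin (2 ^ c)) tr acc1 acc2 acc3} := by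
    have hle : chromatic I P ≤ 2 ^ Nat.clog 2 (chromatic I P) :=
      Nat.le_pow_clog one_lt_two _
    exact protocol_of_coloring I P hIP hinj hle (Nat.pow_pos (by norm_num)) f hf
  -- lower bound: any protocol size bounds chromatic
  have hlb : ∀ c ∈ {c : ℕ | ∃ (tr : V × V × V → Fin (2 ^ c))
      (acc1 acc2 acc3 : V → Fin (2 ^ c) → Prop),
        IsProtocol I P (Fin (2 ^ c)) tr acc1 acc2 acc3},
      Nat.clog 2 (chromatic I P) ≤ c := by
    rintro c ⟨tr, a1, a2, a3, hpr⟩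
    have h2c : chromatic I P ≤ 2 ^ c :=
      Nat.sInf_le ⟨tr, fun m => coloring_of_protocol I P hIP hinj tr a1 a2 a3 hpr m⟩
    exact (Nat.clog_le_iff_le_pow one_lt_two).mpr h2c
  exact le_antisymm (Nat.sInf_le hccmem) (le_csInf ⟨_, hccmem⟩ hlb)
end

section
/- For any NOF permutation problem I over Σ² (with |Σ|=N), there exist partitions of the three index sets Σ² such that the induced block structure on the colored tensor (Ĩ, ⟨N,N,N⟩) has outer structure equal to the matrix multiplication tensor ⟨N,1,1⟩, and every nonzero inner block equals ⟨1,N,N⟩ with its green terms forming an independent set (chromatic number 1). -/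
open Set

/-- The matrix multiplication tensor `⟨N,N,N⟩` over alphabet `σ`. -/
def MMset (σ : Type) : Set ((σ × σ) × (σ × σ) × (σ × σ)) :=
  {t | t.1.2 = t.2.1.1 ∧ t.2.1.2 = t.2.2.1 ∧ t.2.2.2 = t.1.1}

/-- Green terms of an NOF problem `L ⊆ σ³`, inside the matrix multiplication tensor. -/
def tild {σ : Type} (L : Set (σ × σ × σ)) : Set ((σ × σ) × (σ × σ) × (σ × σ)) :=
  {t | ∃ x y z : σ, (x, y, z) ∈ L ∧ t = ((x, y), (y, z), (z, x))}

/-- `L` is the graph of a Latin square: each pair of coordinates determines the third. -/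
def IsLatin {σ : Type} (L : Set (σ × σ × σ)) : Prop :=
  (∀ x y : σ, ∃! z, (x, y, z) ∈ L) ∧ (∀ y z : σ, ∃! x, (x, y, z) ∈ L) ∧
    (∀ x z : σ, ∃! y, (x, y, z) ∈ L)

/-- The block `A_t × B_t × C` of the Laser-method partitions `A_t = {(i,t)}`,
`B_t = {(t,i)}`, trivial partition on the third index set. -/
def laserBlock {σ : Type} (t : σ) : Set ((σ × σ) × (σ × σ) × (σ × σ)) :=
  {p | p.1.2 = t ∧ p.2.1.1 = t}

/-- The outer structure of the Laser-method block partition of `P`. -/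
def laserOuter {σ : Type} (P : Set ((σ × σ) × (σ × σ) × (σ × σ))) : Set (σ × σ × Unit) :=
  {q | ∃ p ∈ P, p.1.2 = q.1 ∧ p.2.1.1 = q.2.1}

lemma tild_block_eq {σ : Type} (L : Set (σ × σ × σ)) (t : σ) :
    tild L ∩ laserBlock t =
      {p | ∃ x z : σ, (x, t, z) ∈ L ∧ p = ((x, t), (t, z), (z, x))} := by
  ext p
  constructor
  · rintro ⟨⟨x, y, z, hxyz, rfl⟩, h1, h2⟩
    simp only [laserBlock, Set.mem_setOf_eq] at h1 h2
    subst h1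
    exact ⟨x, z, hxyz, rfl⟩
  · rintro ⟨x, z, hxz, rfl⟩
    exact ⟨⟨x, t, z, hxz, rfl⟩, rfl, rfl⟩

lemma laser_indep {σ : Type} (L : Set (σ × σ × σ)) (hL : IsLatin L) (t : σ) :
    IsIndep (tild L ∩ laserBlock t) (MMset σ ∩ laserBlock t) (tild L ∩ laserBlock t) := by
  obtain ⟨h1, h2, _⟩ := hL
  rw [tild_block_eq]
  refine ⟨le_refl _, ?_, ?_⟩
  · rintro p ⟨x, z, hxz, rfl⟩ p' ⟨x', z', hxz', rfl⟩ h
    rcases h with h | h | h <;> simp only [Prod.mk.injEq] at h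
    · obtain ⟨rfl, -⟩ := h
      obtain rfl := (h1 x t).unique hxz hxz'
      rfl
    · obtain ⟨-, rfl⟩ := h
      obtain rfl := (h2 t z).unique hxz hxz'
      rfl
    · obtain ⟨rfl, rfl⟩ := h
      rfl
  · ext p
    constructor
    · rintro ⟨⟨hp, hb1, hb2⟩, hp1, hp2, hp3⟩
      obtain ⟨q, ⟨x, z, hxz, rfl⟩, hq⟩ := hp3
      refine ⟨x, z, hxz, ?_⟩
      obtain ⟨⟨pa, pb⟩, ⟨pc, pd⟩, pe, pf⟩ := p
      obtain ⟨hm1, hm2, hm3⟩ := hp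
      simp only [laserBlock, Set.mem_setOf_eq] at hb1 hb2
      simp only [proj3, Set.mem_image] at hq
      simp only at hm1 hm2 hm3 hq
      injection hq with hq1 hq2
      subst hq1; subst hq2; subst hm3; subst hm2; subst hb1; subst hb2
      rfl
    · rintro ⟨x, z, hxz, rfl⟩
      refine ⟨⟨⟨rfl, rfl, rfl⟩, rfl, rfl⟩, ?_, ?_, ?_⟩
      · exact ⟨((x, t), (t, z), (z, x)), ⟨x, z, hxz, rfl⟩, rfl⟩
      · exact ⟨((x, t), (t, z), (z, x)), ⟨x, z, hxz, rfl⟩, rfl⟩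
      · exact ⟨((x, t), (t, z), (z, x)), ⟨x, z, hxz, rfl⟩, rfl⟩
/-- For any NOF permutation problem `L`, the Laser-method partitions give a block structure
on `(Ĩ, ⟨N,N,N⟩)` whose outer structure is `⟨N,1,1⟩` (the diagonal over `σ × σ × Unit`) and
each nonzero inner block equals `⟨1,N,N⟩`, with green terms forming an independent set
(chromatic number at most 1). -/
theorem laser_block_structure (σ : Type) [Fintype σ]
    (L : Set (σ × σ × σ)) (hL : IsLatin L) :
    laserOuter (MMset σ) = {q : σ × σ × Unit | q.1 = q.2.1} ∧
    ∀ t : σ,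
      (MMset σ ∩ laserBlock t = {p | ∃ j k : σ, p = ((j, t), (t, k), (k, j))}) ∧
      IsIndep (tild L ∩ laserBlock t) (MMset σ ∩ laserBlock t) (tild L ∩ laserBlock t) ∧
      chromatic (tild L ∩ laserBlock t) (MMset σ ∩ laserBlock t) ≤ 1 := by
  constructor
  · ext ⟨a, b, c⟩
    simp only [laserOuter, MMset, Set.mem_setOf_eq]
    constructor
    · rintro ⟨p, ⟨e1, e2, e3⟩, f1, f2⟩
      rw [← f1, ← f2]; exact e1
    · rintro rfl
      exact ⟨((a, a), (a, a), (a, a)), ⟨rfl, rfl, rfl⟩, rfl, rfl⟩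
  · intro t
    refine ⟨?_, laser_indep L hL t, ?_⟩
    · ext ⟨⟨a1, a2⟩, ⟨b1, b2⟩, ⟨c1, c2⟩⟩
      simp only [MMset, laserBlock, Set.mem_inter_iff, Set.mem_setOf_eq, Prod.mk.injEq]
      constructor
      · rintro ⟨⟨h1, h2, h3⟩, h4, h5⟩
        exact ⟨a1, b2, by simp_all⟩
      · rintro ⟨j, k, h⟩
        simp_all
    · apply Nat.sInf_le
      refine ⟨fun _ => 0, fun m => ?_⟩
      have he : (tild L ∩ laserBlock t) ∩ (fun _ => (0 : Fin 1)) ⁻¹' {m} =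
          tild L ∩ laserBlock t := by
        ext p
        simp [Subsingleton.elim m 0]
      rw [he]
      exact laser_indep L hL t
end

section
/- Every independent set in the matrix multiplication tensor ⟨N,N,N⟩ gives rise to a tripartite graph on 3N vertices whose edge-disjoint triangles are exactly the elements of the independent set and which contains no other triangles. Consequently, the zeroing-out subrank satisfies Q_zo(⟨N,N,N⟩) ≤ RS(N), where RS(N) is the maximum number of edge-disjoint triangles in an N-vertex-per-part tripartite graph all of whose triangles are edge-disjoint. -/
open Set

/-- `S ⊆ [N]³` is an independent set of the matrix multiplication tensor `⟨N,N,N⟩`: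
distinct triples share no coordinate value, and whenever `(a,b,c₁), (a,b',c), (a',b,c) ∈ S`
then `(a,b,c) ∈ S`. -/
def IndepMM (N : ℕ) (S : Set (Fin N × Fin N × Fin N)) : Prop :=
  (∀ t ∈ S, ∀ t' ∈ S, (t.1 = t'.1 ∨ t.2.1 = t'.2.1 ∨ t.2.2 = t'.2.2) → t = t') ∧
  ∀ a b c : Fin N, (∃ c₁, (a, b, c₁) ∈ S) → (∃ b', (a, b', c) ∈ S) →
    (∃ a', (a', b, c) ∈ S) → (a, b, c) ∈ S

/-- The triangles of the tripartite graph with parts `[N]×{0}`, `[N]×{1}`, `[N]×{2}` and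
edge sets `E01, E12, E20` between consecutive parts. -/
def Tri {N : ℕ} (E01 E12 E20 : Set (Fin N × Fin N)) : Set (Fin N × Fin N × Fin N) :=
  {t | (t.1, t.2.1) ∈ E01 ∧ (t.2.1, t.2.2) ∈ E12 ∧ (t.2.2, t.1) ∈ E20}

/-- A family of triangles (in a tripartite graph) is pairwise edge-disjoint. -/
def EdgeDisjoint {N : ℕ} (T : Set (Fin N × Fin N × Fin N)) : Prop :=
  ∀ t ∈ T, ∀ t' ∈ T,
    ((t.1 = t'.1 ∧ t.2.1 = t'.2.1) ∨ (t.2.1 = t'.2.1 ∧ t.2.2 = t'.2.2) ∨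
      (t.2.2 = t'.2.2 ∧ t.1 = t'.1)) → t = t'

/-- Edges of the graph built from an independent set `S`, one triangle per element. -/
def E01S {N : ℕ} (S : Set (Fin N × Fin N × Fin N)) : Set (Fin N × Fin N) :=
  {e | ∃ c, (e.1, e.2, c) ∈ S}
def E12S {N : ℕ} (S : Set (Fin N × Fin N × Fin N)) : Set (Fin N × Fin N) :=
  {e | ∃ a, (a, e.1, e.2) ∈ S}
def E20S {N : ℕ} (S : Set (Fin N × Fin N × Fin N)) : Set (Fin N × Fin N) :=
  {e | ∃ b, (e.2, b, e.1) ∈ S}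

/-- Zeroing-out subrank of `⟨N,N,N⟩`: maximum size of an independent set. -/
noncomputable def QzoMM (N : ℕ) : ℕ :=
  sSup {k : ℕ | ∃ S, IndepMM N S ∧ S.ncard = k}

/-- Ruzsa–Szemerédi quantity: maximum number of (edge-disjoint) triangles in a tripartite
graph with `N` vertices per part, all of whose triangles are edge-disjoint. -/
noncomputable def RS (N : ℕ) : ℕ :=
  sSup {k : ℕ | ∃ E01 E12 E20 : Set (Fin N × Fin N),
    EdgeDisjoint (Tri E01 E12 E20) ∧ (Tri E01 E12 E20).ncard = k}

lemma tri_eq {N : ℕ} (S : Set (Fin N × Fin N × Fin N)) (hS : IndepMM N S) :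
    Tri (E01S S) (E12S S) (E20S S) = S := by
  ext ⟨a, b, c⟩
  constructor
  · rintro ⟨⟨c₁, h1⟩, ⟨a', h2⟩, ⟨b', h3⟩⟩
    exact hS.2 a b c ⟨c₁, h1⟩ ⟨b', h3⟩ ⟨a', h2⟩
  · intro h
    exact ⟨⟨c, h⟩, ⟨a, h⟩, ⟨b, h⟩⟩

lemma edis {N : ℕ} (S : Set (Fin N × Fin N × Fin N)) (hS : IndepMM N S) :
    EdgeDisjoint S := by
  intro t ht t' ht' h
  exact hS.1 t ht t' ht' (by tauto)

/-- Every independent set of `⟨N,N,N⟩` yields a tripartite graph whose triangles are exactly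
the elements of the set and are pairwise edge-disjoint; hence `Q_zo(⟨N,N,N⟩) ≤ RS(N)`. -/
theorem qzo_le_RS (N : ℕ) :
    (∀ S : Set (Fin N × Fin N × Fin N), IndepMM N S →
      Tri (E01S S) (E12S S) (E20S S) = S ∧ EdgeDisjoint S) ∧
    QzoMM N ≤ RS N := by
  refine ⟨fun S hS => ⟨tri_eq S hS, edis S hS⟩, ?_⟩
  apply csSup_le_csSup
  · refine ⟨N ^ 3, ?_⟩
    rintro k ⟨E01, E12, E20, _, hk⟩
    rw [← hk]
    calc (Tri E01 E12 E20).ncard ≤ Fintype.card (Fin N × Fin N × Fin N) :=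
          Set.ncard_le_ncard (Set.subset_univ _) (Set.toFinite _) |>.trans
            (by simp [Set.ncard_univ])
      _ = N ^ 3 := by simp [pow_succ, mul_assoc]
  · exact ⟨0, ∅, ⟨fun t ht => ht.elim, fun a b c h => by simp at h⟩, by simp⟩
  · rintro k ⟨S, hS, hk⟩
    exact ⟨E01S S, E12S S, E20S S, by rw [tri_eq S hS]; exact edis S hS,
      by rw [tri_eq S hS]; exact hk⟩
end

section
/- If triangles are placed in a tripartite graph from an independent set S of the matrix multiplication tensor ⟨N,N,N⟩ (one triangle per element of S), then these |S| triangles are pairwise edge-disjoint. -/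
/-- If `S ⊆ [N]³` is an independent set of the matrix multiplication tensor
(any two triples of `S` agreeing in two coordinates agree in the third), then the
triangles placed in the tripartite graph on `[N]×{0,1,2}` (with edges
`{(a,0),(b,1)}, {(b,1),(c,2)}, {(c,2),(a,0)}` for each `(a,b,c) ∈ S`) are pairwise
edge-disjoint: distinct elements of `S` share no edge. -/
theorem triangles_from_indep_edge_disjoint (N : ℕ) (S : Set (Fin N × Fin N × Fin N))
    (h12 : ∀ a b c c', (a, b, c) ∈ S → (a, b, c') ∈ S → c = c')
    (h23 : ∀ a a' b c, (a, b, c) ∈ S → (a', b, c) ∈ S → a = a')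
    (h13 : ∀ a b b' c, (a, b, c) ∈ S → (a, b', c) ∈ S → b = b') :
    ∀ t ∈ S, ∀ t' ∈ S, t ≠ t' →
      ¬((t.1 = t'.1 ∧ t.2.1 = t'.2.1) ∨ (t.2.1 = t'.2.1 ∧ t.2.2 = t'.2.2) ∨
        (t.2.2 = t'.2.2 ∧ t.1 = t'.1)) := by
  rintro ⟨a, b, c⟩ ht ⟨a', b', c'⟩ ht' hne
  rintro (⟨h1, h2⟩ | ⟨h1, h2⟩ | ⟨h1, h2⟩) <;> simp only at h1 h2 <;> subst h1 <;> subst h2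
  · exact hne (by rw [h12 _ _ _ _ ht ht'])
  · exact hne (by rw [h23 _ _ _ _ ht ht'])
  · exact hne (by rw [h13 _ _ _ _ ht ht'])
end

section
/- Let r be any function from tensors to nonnegative reals that is sub-additive under direct sums of tensors over disjoint index sets and monotone under identifications (zeroing out followed by merging variables). Then for any promise problem I ⊆ P, cc(I,P) ≥ log₂(r(I)/r(P)). -/
open Set

def MonoCube {V : Type} (A B Q : Set (V × V × V)) : Prop :=
  (∃ X Y Z : Set V, Q = B ∩ (X ×ˢ (Y ×ˢ Z))) ∧ (Q ⊆ A ∨ Disjoint Q A)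

noncomputable def ccCube {V : Type} (A B : Set (V × V × V)) : ℕ :=
  sInf {c : ℕ | ∃ (k : ℕ) (f : Fin k → Set (V × V × V)), k ≤ 2 ^ c ∧
    (∀ i, MonoCube A B (f i)) ∧ ∀ t ∈ B, ∃! i, t ∈ f i}

/-- `T'` is a zeroing out of `T`. -/
def IsZeroOut {α β γ : Type} (T T' : α × β × γ → ℝ) : Prop :=
  ∃ X : Set α, ∃ Y : Set β, ∃ Z : Set γ, T' = (X ×ˢ (Y ×ˢ Z)).indicator T

/-- Direct sum (block-diagonal combination) of two tensors over disjoint index sets. -/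
def dsum {α β γ α' β' γ' : Type} (T : α × β × γ → ℝ) (T' : α' × β' × γ' → ℝ) :
    (α ⊕ α') × (β ⊕ β') × (γ ⊕ γ') → ℝ := fun t =>
  match t with
  | (Sum.inl a, Sum.inl b, Sum.inl c) => T (a, b, c)
  | (Sum.inr a, Sum.inr b, Sum.inr c) => T' (a, b, c)
  | _ => 0

/-- `B` is an identification of `A`: a zeroing out of `A` followed by merging variables. -/
def IsIdentification {α β γ α' β' γ' : Type} [Fintype α] [Fintype β] [Fintype γ]
    [DecidableEq α'] [DecidableEq β'] [DecidableEq γ']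
    (A : α × β × γ → ℝ) (B : α' × β' × γ' → ℝ) : Prop :=
  ∃ A₀ : α × β × γ → ℝ, IsZeroOut A A₀ ∧
    ∃ (f : α → α') (g : β → β') (h : γ → γ'),
      ∀ a' b' c', B (a', b', c') =
        ∑ t : α × β × γ, if f t.1 = a' ∧ g t.2.1 = b' ∧ h t.2.2 = c' then A₀ t else 0

lemma sum_ite_eq_point {α β γ : Type} [Fintype α] [Fintype β] [Fintype γ]
    [DecidableEq α] [DecidableEq β] [DecidableEq γ]
    (A : α × β × γ → ℝ) (a : α) (b : β) (c : γ) :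
    (∑ t : α × β × γ, if t.1 = a ∧ t.2.1 = b ∧ t.2.2 = c then A t else 0) = A (a, b, c) := by
  have h : ∀ t : α × β × γ, (t.1 = a ∧ t.2.1 = b ∧ t.2.2 = c) ↔ t = (a, b, c) := by
    rintro ⟨x, y, z⟩; simp [Prod.ext_iff]
  simp only [h]
  simp [Finset.sum_ite_eq']

lemma triple_sum {α β γ : Type} [Fintype α] [Fintype β] [Fintype γ]
    [DecidableEq α] [DecidableEq β] [DecidableEq γ]
    (A : α × β × γ → ℝ) (a : α) (b : β) (c : γ) :
    (∑ x, ∑ y, ∑ z, if x = a ∧ y = b ∧ z = c then A (x, y, z) else 0) = A (a, b, c) := by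
  simp [ite_and, Finset.sum_ite_eq']

lemma zero_ident {α β γ α' β' γ' : Type} [Fintype α] [Fintype β] [Fintype γ]
    [DecidableEq α'] [DecidableEq β'] [DecidableEq γ']
    (A : α × β × γ → ℝ) (f : α → α') (g : β → β') (h : γ → γ') :
    IsIdentification A (fun _ : α' × β' × γ' => (0 : ℝ)) := by
  refine ⟨fun _ => 0, ⟨∅, Set.univ, Set.univ, by funext t; simp⟩, f, g, h, ?_⟩
  intro a b c; simp

lemma cube_ident {V : Type} [Fintype V] [DecidableEq V] (P : Set (V × V × V)) (X Y Z : Set V) :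
    IsIdentification (P.indicator 1) ((P ∩ (X ×ˢ (Y ×ˢ Z))).indicator 1) := by
  refine ⟨(X ×ˢ (Y ×ˢ Z)).indicator (P.indicator 1), ⟨X, Y, Z, rfl⟩, id, id, id, ?_⟩
  intro a b c
  simp only [id]
  rw [sum_ite_eq_point]
  rw [Set.indicator_indicator, Set.inter_comm]

lemma dsum_union_ident {V : Type} [Fintype V] [DecidableEq V] (Q S : Set (V × V × V))
    (hd : Disjoint Q S) :
    IsIdentification (dsum (Q.indicator 1) (S.indicator 1)) ((Q ∪ S).indicator 1) := by
  refine ⟨dsum (Q.indicator 1) (S.indicator 1), ⟨Set.univ, Set.univ, Set.univ, by simp⟩,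
    Sum.elim id id, Sum.elim id id, Sum.elim id id, ?_⟩
  intro a b c
  rw [Set.indicator_union_of_disjoint hd]
  have e1 : ∀ x : V, Sum.elim id id (Sum.inl x : V ⊕ V) = x := fun x => (Sum.elim_inl id id x).trans rfl
  have e2 : ∀ x : V, Sum.elim id id (Sum.inr x : V ⊕ V) = x := fun x => (Sum.elim_inr id id x).trans rfl
  simp only [Fintype.sum_prod_type, Fintype.sum_sum_type, e1, e2, dsum,
    ite_self, Finset.sum_const_zero, add_zero, zero_add]
  rw [triple_sum, triple_sum]

/-- If `r` is sub-additive under direct sums over disjoint index sets and monotone under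
identifications, then for any promise problem `I ⊆ P`,
`cc(I,P) ≥ log₂ (r(I) / r(P))`. -/
theorem cc_ge_logb_ratio_asymptotic_spectrum
    (r : ∀ (α β γ : Type) [Fintype α] [Fintype β] [Fintype γ], (α × β × γ → ℝ) → ℝ)
    (hsub : ∀ (α β γ α' β' γ' : Type) [Fintype α] [Fintype β] [Fintype γ]
      [Fintype α'] [Fintype β'] [Fintype γ']
      (A : α × β × γ → ℝ) (B : α' × β' × γ' → ℝ),
      r _ _ _ (dsum A B) ≤ r α β γ A + r α' β' γ' B)
    (hmono : ∀ (α β γ α' β' γ' : Type) [Fintype α] [Fintype β] [Fintype γ]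
      [Fintype α'] [Fintype β'] [Fintype γ']
      [DecidableEq α'] [DecidableEq β'] [DecidableEq γ']
      (A : α × β × γ → ℝ) (B : α' × β' × γ' → ℝ),
      IsIdentification A B → r α' β' γ' B ≤ r α β γ A)
    (V : Type) [Fintype V] (I P : Set (V × V × V)) (hIP : I ⊆ P) :
    Real.logb 2 (r V V V (I.indicator 1) / r V V V (P.indicator 1)) ≤ (ccCube I P : ℝ) := by
  classical
  -- the defining set of the `sInf` is nonempty : use the partition of P into points
  have hne : {c : ℕ | ∃ (k : ℕ) (f : Fin k → Set (V × V × V)), k ≤ 2 ^ c ∧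
      (∀ i, MonoCube I P (f i)) ∧ ∀ t ∈ P, ∃! i, t ∈ f i}.Nonempty := by
    set n := Fintype.card (V × V × V) with hn
    set e : Fin n ≃ (V × V × V) := (Fintype.equivFin (V × V × V)).symm with he
    have hmemrect : ∀ (i : Fin n) (t : V × V × V),
        t ∈ ({(e i).1} ×ˢ ({(e i).2.1} ×ˢ {(e i).2.2}) : Set (V × V × V)) ↔ t = e i := by
      rintro i ⟨x, y, z⟩
      simp [Set.mem_prod, Prod.ext_iff]
    refine ⟨n, n, fun i => P ∩ ({(e i).1} ×ˢ ({(e i).2.1} ×ˢ {(e i).2.2})),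
      (Nat.lt_two_pow_self (n := n)).le, ?_, ?_⟩
    · intro i
      refine ⟨⟨_, _, _, rfl⟩, ?_⟩
      by_cases h : (e i : V × V × V) ∈ I
      · left
        rintro t ⟨-, h2⟩
        rw [hmemrect i t] at h2
        rw [h2]; exact h
      · right
        rw [Set.disjoint_left]
        rintro t ⟨-, h2⟩ hti
        rw [hmemrect i t] at h2
        rw [h2] at hti; exact h hti
    · intro t ht
      refine ⟨e.symm t, ⟨ht, ?_⟩, ?_⟩
      · rw [hmemrect]
        simp
      · rintro j ⟨-, h2⟩
        rw [hmemrect j t] at h2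
        rw [h2]; simp
  obtain ⟨k, f, hk, hcube, hpart⟩ : ∃ (k : ℕ) (f : Fin k → Set (V × V × V)),
      k ≤ 2 ^ ccCube I P ∧ (∀ i, MonoCube I P (f i)) ∧ ∀ t ∈ P, ∃! i, t ∈ f i :=
    Nat.sInf_mem hne
  set rP := r V V V (P.indicator 1) with hrP
  have hfP : ∀ i, f i ⊆ P := by
    intro i
    obtain ⟨⟨X, Y, Z, hQ⟩, -⟩ := hcube i
    rw [hQ]; exact Set.inter_subset_left
  have hdisj : ∀ i j, i ≠ j → Disjoint (f i) (f j) := by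
    intro i j hij
    rw [Set.disjoint_left]
    intro t hti htj
    obtain ⟨u, hu, huniq⟩ := hpart t (hfP i hti)
    exact hij ((huniq i hti).trans (huniq j htj).symm)
  have hone : ∀ i, r V V V ((f i).indicator 1) ≤ rP := by
    intro i
    obtain ⟨⟨X, Y, Z, hQ⟩, -⟩ := hcube i
    rw [hQ]
    exact hmono _ _ _ _ _ _ _ _ (cube_ident P X Y Z)
  have hzero : ∀ A : V × V × V → ℝ, r V V V (fun _ => (0 : ℝ)) ≤ r V V V A :=
    fun A => hmono _ _ _ _ _ _ A _ (zero_ident A id id id)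
  have h00 : (0 : ℝ) ≤ r V V V (fun _ => 0) := by
    have h1 : r V V V (fun _ => (0 : ℝ)) ≤
        r _ _ _ (dsum (fun _ : V × V × V => (0 : ℝ)) (fun _ : V × V × V => (0 : ℝ))) :=
      hmono _ _ _ _ _ _ _ _
        (zero_ident _ (Sum.elim id id) (Sum.elim id id) (Sum.elim id id))
    have h2 := hsub _ _ _ _ _ _ (fun _ : V × V × V => (0 : ℝ)) (fun _ : V × V × V => (0 : ℝ))
    linarith
  have hP0 : (0 : ℝ) ≤ rP := le_trans h00 (hzero _)
  have hI0 : (0 : ℝ) ≤ r V V V (I.indicator 1) := le_trans h00 (hzero _)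
  -- main induction
  have hind : ∀ s : Finset (Fin k),
      r V V V ((⋃ i ∈ s, f i).indicator 1) ≤ (max s.card 1 : ℕ) * rP := by
    intro s
    induction s using Finset.induction_on with
    | empty =>
      have h1 : (⋃ i ∈ (∅ : Finset (Fin k)), f i) = (∅ : Set (V × V × V)) := by simp
      have h2 : ((∅ : Set (V × V × V)).indicator 1 : V × V × V → ℝ) = fun _ => 0 := by
        funext t; simp
      rw [h1, h2]
      simpa using hzero (P.indicator 1)
    | @insert a s ha ih =>
      rw [Finset.set_biUnion_insert]
      by_cases hs : s = ∅
      · subst hs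
        have h1 : (f a ∪ ⋃ i ∈ (∅ : Finset (Fin k)), f i) = f a := by simp
        rw [h1]
        simpa using hone a
      · have hcard : 1 ≤ s.card := Finset.one_le_card.2 (Finset.nonempty_iff_ne_empty.2 hs)
        have hdis : Disjoint (f a) (⋃ i ∈ s, f i) := by
          rw [Set.disjoint_left]
          intro t hta htU
          rw [Set.mem_iUnion₂] at htU
          obtain ⟨i, hi, hti⟩ := htU
          have : a ≠ i := by rintro rfl; exact ha hi
          exact (Set.disjoint_left.1 (hdisj a i this)) hta hti
        have step1 : r V V V ((f a ∪ ⋃ i ∈ s, f i).indicator 1) ≤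
            r _ _ _ (dsum ((f a).indicator 1) ((⋃ i ∈ s, f i).indicator 1)) :=
          hmono _ _ _ _ _ _ _ _ (dsum_union_ident _ _ hdis)
        have step2 := hsub _ _ _ _ _ _ ((f a).indicator (1 : V × V × V → ℝ))
          ((⋃ i ∈ s, f i).indicator (1 : V × V × V → ℝ))
        have step3 := hone a
        have hmax1 : (max s.card 1) = s.card := max_eq_left hcard
        have hmax2 : (max (insert a s).card 1) = s.card + 1 := by
          rw [Finset.card_insert_of_notMem ha]
          omega
        rw [hmax1] at ih
        rw [hmax2]
        push_cast
        push_cast at ih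
        linarith
  -- I is the union of the cubes inside I
  have hIU : I = ⋃ i ∈ Finset.univ.filter (fun i => f i ⊆ I), f i := by
    apply Set.Subset.antisymm
    · intro t ht
      obtain ⟨i, hi, -⟩ := hpart t (hIP ht)
      have hfi : f i ⊆ I := by
        rcases (hcube i).2 with h | h
        · exact h
        · exact absurd ht (Set.disjoint_left.1 h hi)
      have hi' : i ∈ Finset.univ.filter (fun i => f i ⊆ I) :=
        Finset.mem_filter.2 ⟨Finset.mem_univ i, hfi⟩
      exact Set.mem_biUnion hi' hi
    · intro t ht
      rw [Set.mem_iUnion₂] at ht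
      obtain ⟨i, hi, hti⟩ := ht
      exact (Finset.mem_filter.1 hi).2 hti
  set m := (Finset.univ.filter (fun i => f i ⊆ I)).card with hm
  have hrI : r V V V (I.indicator 1) ≤ (max m 1 : ℕ) * rP := by
    rw [hIU]; exact hind _
  have hmk : max m 1 ≤ 2 ^ ccCube I P := by
    have h1 : m ≤ k := le_trans (Finset.card_filter_le _ _) (by simp)
    have h2 : 1 ≤ 2 ^ ccCube I P := Nat.one_le_two_pow
    exact max_le (h1.trans hk) h2
  have key : r V V V (I.indicator 1) ≤ (2 ^ ccCube I P : ℝ) * rP := by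
    refine le_trans hrI ?_
    have hcast : ((max m 1 : ℕ) : ℝ) ≤ ((2 ^ ccCube I P : ℕ) : ℝ) := by exact_mod_cast hmk
    have := mul_le_mul_of_nonneg_right hcast hP0
    push_cast at this ⊢
    linarith
  -- finish
  rcases hP0.lt_or_eq with hPpos | hPeq
  · rcases hI0.lt_or_eq with hIpos | hIeq
    · have hdiv : r V V V (I.indicator 1) / rP ≤ (2 : ℝ) ^ ccCube I P :=
        (div_le_iff₀ hPpos).2 (by push_cast at key ⊢; linarith)
      have hdivpos : 0 < r V V V (I.indicator 1) / rP := div_pos hIpos hPpos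
      have h1 : Real.logb 2 (r V V V (I.indicator 1) / rP) ≤
          Real.logb 2 ((2 : ℝ) ^ ccCube I P) :=
        Real.logb_le_logb_of_le (by norm_num) hdivpos hdiv
      refine le_trans h1 ?_
      rw [show ((2 : ℝ) ^ ccCube I P) = (2 : ℝ) ^ ((ccCube I P : ℕ) : ℝ) from
        (Real.rpow_natCast 2 _).symm]
      rw [Real.logb_rpow (by norm_num) (by norm_num)]
    · rw [← hIeq, zero_div, Real.logb_zero]
      positivity
  · rw [← hPeq, div_zero, Real.logb_zero]
    positivity
end

section
/- Triangle inequality for promise communication complexity: if T₁ ⊆ T₂ ⊆ T₃ are {0,1}-tensors, then cc(T₁,T₃) ≤ cc(T₁,T₂) + cc(T₂,T₃). -/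
open Set

lemma cc_set_nonempty {V : Type} [Fintype V] (A B : Set (V × V × V)) :
    {c : ℕ | ∃ (k : ℕ) (f : Fin k → Set (V × V × V)), k ≤ 2 ^ c ∧
      (∀ i, MonoCube A B (f i)) ∧ ∀ t ∈ B, ∃! i, t ∈ f i}.Nonempty := by
  classical
  haveI : Fintype ↥B := (Set.toFinite B).fintype
  set n := Fintype.card ↥B with hn
  let e : ↥B ≃ Fin n := Fintype.equivFin ↥B
  refine ⟨n, n, fun i => {((e.symm i : ↥B) : V × V × V)}, (Nat.lt_two_pow_self (n := n)).le, ?_, ?_⟩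
  · intro i
    set t : V × V × V := ((e.symm i : ↥B) : V × V × V) with htdef
    have ht : t ∈ B := (e.symm i).2
    constructor
    · refine ⟨{t.1}, {t.2.1}, {t.2.2}, ?_⟩
      ext ⟨x, y, z⟩
      simp only [Set.mem_singleton_iff, Set.mem_inter_iff, Set.mem_prod, Prod.ext_iff]
      constructor
      · rintro ⟨rfl, rfl, rfl⟩
        exact ⟨ht, rfl, rfl, rfl⟩
      · rintro ⟨_, h1, h2, h3⟩
        exact ⟨h1, h2, h3⟩
    · by_cases hA : t ∈ A
      · left; simp [hA]; exact hA
      · right; simp [Set.disjoint_left, hA]; exact hA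
  · intro t ht
    refine ⟨e ⟨t, ht⟩, by simp, ?_⟩
    intro j hj
    simp only [Set.mem_singleton_iff] at hj
    have : e.symm j = ⟨t, ht⟩ := Subtype.ext hj.symm
    rw [← this, Equiv.apply_symm_apply]

/-- Triangle inequality for promise communication complexity. -/
theorem ccCube_triangle {V : Type} [Fintype V] (T₁ T₂ T₃ : Set (V × V × V))
    (h12 : T₁ ⊆ T₂) (h23 : T₂ ⊆ T₃) :
    ccCube T₁ T₃ ≤ ccCube T₁ T₂ + ccCube T₂ T₃ := by
  classical
  obtain ⟨k₁, f, hpos, hk₁, hfm, hfc⟩ :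
      ∃ (k₁ : ℕ) (f : Fin k₁ → Set (V × V × V)), 0 < k₁ ∧ k₁ ≤ 2 ^ ccCube T₁ T₂ ∧
        (∀ i, MonoCube T₁ T₂ (f i)) ∧ ∀ t ∈ T₂, ∃! i, t ∈ f i := by
    obtain ⟨k₁, f, hk₁, hfm, hfc⟩ := Nat.sInf_mem (cc_set_nonempty T₁ T₂)
    rcases Nat.eq_zero_or_pos k₁ with h0 | hpos
    · subst h0
      refine ⟨1, fun _ => ∅, one_pos, Nat.one_le_two_pow, ?_, ?_⟩
      · intro i
        exact ⟨⟨∅, ∅, ∅, by simp⟩, Or.inr (by simp)⟩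
      · intro t ht
        obtain ⟨i, -⟩ := hfc t ht
        exact i.elim0
    · exact ⟨k₁, f, hpos, hk₁, hfm, hfc⟩
  obtain ⟨k₂, g, hk₂, hgm, hgc⟩ := Nat.sInf_mem (cc_set_nonempty T₂ T₃)
  set i0 : Fin k₁ := ⟨0, hpos⟩ with hi0
  set H : Fin k₁ × Fin k₂ → Set (V × V × V) :=
    fun p => if g p.2 ⊆ T₂ then f p.1 ∩ g p.2 else if p.1 = i0 then g p.2 else ∅ with hH
  have key : ∀ p : Fin k₁ × Fin k₂, MonoCube T₁ T₃ (H p) := by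
    rintro ⟨i, j⟩
    by_cases hj : g j ⊆ T₂
    · have : H (i, j) = f i ∩ g j := by rw [hH]; simp [hj]
      rw [this]
      obtain ⟨⟨X, Y, Z, hX⟩, hmono⟩ := hfm i
      obtain ⟨⟨X', Y', Z', hX'⟩, -⟩ := hgm j
      constructor
      · refine ⟨X ∩ X', Y ∩ Y', Z ∩ Z', ?_⟩
        ext ⟨x, y, z⟩
        simp only [hX, hX', Set.mem_inter_iff, Set.mem_prod]
        constructor
        · rintro ⟨⟨h2, hx, hy, hz⟩, h3, hx', hy', hz'⟩
          exact ⟨h3, ⟨hx, hx'⟩, ⟨hy, hy'⟩, hz, hz'⟩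
        · rintro ⟨h3, ⟨hx, hx'⟩, ⟨hy, hy'⟩, hz, hz'⟩
          have h2 : (x, y, z) ∈ T₂ := hj (by rw [hX']; exact ⟨h3, hx', hy', hz'⟩)
          exact ⟨⟨h2, hx, hy, hz⟩, h3, hx', hy', hz'⟩
      · rcases hmono with h | h
        · exact Or.inl (Set.inter_subset_left.trans h)
        · exact Or.inr (h.mono_left Set.inter_subset_left)
    · have hdisj : Disjoint (g j) T₂ := (hgm j).2.resolve_left hj
      by_cases hi : i = i0
      · have : H (i, j) = g j := by rw [hH]; simp [hj, hi]
        rw [this]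
        exact ⟨(hgm j).1, Or.inr (hdisj.mono_right h12)⟩
      · have : H (i, j) = ∅ := by rw [hH]; simp [hj, hi]
        rw [this]
        exact ⟨⟨∅, ∅, ∅, by simp⟩, Or.inr (by simp)⟩
  have hHsub : ∀ p : Fin k₁ × Fin k₂, H p ⊆ g p.2 := by
    rintro ⟨i, j⟩
    rw [hH]
    dsimp only
    split_ifs
    · exact Set.inter_subset_right
    · exact subset_rfl
    · exact Set.empty_subset _
  have cover : ∀ t ∈ T₃, ∃! p : Fin k₁ × Fin k₂, t ∈ H p := by
    intro t ht
    obtain ⟨j, htj, hjq⟩ := hgc t ht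
    by_cases hj : g j ⊆ T₂
    · obtain ⟨i, hti, hiq⟩ := hfc t (hj htj)
      refine ⟨(i, j), ?_, ?_⟩
      · rw [hH]; simp only; rw [if_pos hj]; exact ⟨hti, htj⟩
      · rintro ⟨i', j'⟩ hp
        have hj' : j' = j := hjq j' (hHsub (i', j') hp)
        subst hj'
        rw [hH] at hp; simp only at hp; rw [if_pos hj] at hp
        have : i' = i := hiq i' hp.1
        simp [this]
    · refine ⟨(i0, j), ?_, ?_⟩
      · rw [hH]; simp only; rw [if_neg hj]; simpa using htj
      · rintro ⟨i', j'⟩ hp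
        have hj' : j' = j := hjq j' (hHsub (i', j') hp)
        subst hj'
        rw [hH] at hp; simp only at hp; rw [if_neg hj] at hp
        by_cases hi' : i' = i0
        · simp [hi']
        · rw [if_neg hi'] at hp
          exact absurd hp (Set.notMem_empty t)
  have hmem : ccCube T₁ T₂ + ccCube T₂ T₃ ∈
      {c : ℕ | ∃ (k : ℕ) (f : Fin k → Set (V × V × V)), k ≤ 2 ^ c ∧
        (∀ i, MonoCube T₁ T₃ (f i)) ∧ ∀ t ∈ T₃, ∃! i, t ∈ f i} := by
    refine ⟨k₁ * k₂, H ∘ finProdFinEquiv.symm, ?_, ?_, ?_⟩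
    · calc k₁ * k₂ ≤ 2 ^ ccCube T₁ T₂ * 2 ^ ccCube T₂ T₃ := Nat.mul_le_mul hk₁ hk₂
        _ = 2 ^ (ccCube T₁ T₂ + ccCube T₂ T₃) := (pow_add 2 _ _).symm
    · intro i; exact key _
    · intro t ht
      obtain ⟨p, hp, hq⟩ := cover t ht
      refine ⟨finProdFinEquiv p, by simpa using hp, ?_⟩
      intro i hi
      have : finProdFinEquiv.symm i = p := hq _ hi
      rw [← this, Equiv.apply_symm_apply]
  exact Nat.sInf_le hmem
end

section
/- If G is an abelian group and S ⊆ G has no three-term arithmetic progression (no x,z,y ∈ S with x+y = 2z except x=y=z), then S' = {(x,x,-2x) : x ∈ S} is an independent set in the colored tensor of the equality-under-sum-zero-promise problem (I, T_G), where I = {(x,x,-2x) : x ∈ G} and T_G is the structure tensor of G. Hence α(I,T_G) ≥ |S|. -/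
open Set

noncomputable def alphaT {A B C : Type} (I P : Set (A × B × C)) : ℕ :=
  sSup {k : ℕ | ∃ S, IsIndep I P S ∧ S.ncard = k}

/-- The structure tensor of a finite abelian group `G`. -/
def structureTensor (G : Type) [AddCommGroup G] : Set (G × G × G) :=
  {t | t.1 + t.2.1 + t.2.2 = 0}

/-- Green terms of the problem `EQ_G`: triples `(x, x, -2x)`. -/
def eqGreen (G : Type) [AddCommGroup G] : Set (G × G × G) :=
  {t | ∃ x : G, t = (x, x, -(2 • x))}

/-- If `S ⊆ G` has no nontrivial three-term arithmetic progression, then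
`S' = {(x,x,-2x) : x ∈ S}` is an independent set of the colored tensor `(I, T_G)` of the
equality-under-sum-zero-promise problem; hence `α(I, T_G) ≥ |S|`. -/
theorem capset_indep (G : Type) [AddCommGroup G] [Fintype G] (S : Set G)
    (h3ap : ∀ x ∈ S, ∀ z ∈ S, ∀ y ∈ S, x + y = 2 • z → x = z ∧ y = z) :
    IsIndep (eqGreen G) (structureTensor G) {t | ∃ x ∈ S, t = (x, x, -(2 • x))} ∧
    S.ncard ≤ alphaT (eqGreen G) (structureTensor G) := by
  set S' : Set (G × G × G) := {t | ∃ x ∈ S, t = (x, x, -(2 • x))} with hS'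
  have key2 : ∀ x ∈ S, ∀ x' ∈ S, 2 • x = 2 • x' → x = x' := by
    intro x hx x' hx' h
    have h' : x' + x' = 2 • x := by rw [h, two_nsmul]
    exact ((h3ap x' hx' x hx x' hx' h').1).symm
  have hindep : IsIndep (eqGreen G) (structureTensor G) S' := by
    refine ⟨?_, ?_, ?_⟩
    · rintro t ⟨x, hx, rfl⟩; exact ⟨x, rfl⟩
    · rintro t ⟨x, hx, rfl⟩ t' ⟨x', hx', rfl⟩ h
      simp only [Prod.mk.injEq] at h ⊢
      have hxx : x = x' := by
        rcases h with h | h | h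
        · exact h
        · exact h
        · exact key2 x hx x' hx' (neg_injective h)
      exact ⟨hxx, hxx, by rw [hxx]⟩
    · ext t
      constructor
      · rintro ⟨ht, h1, h2, h3⟩
        obtain ⟨u, ⟨x, hx, rfl⟩, hu1⟩ := h1
        obtain ⟨v, ⟨y, hy, rfl⟩, hv1⟩ := h2
        obtain ⟨w, ⟨z, hz, rfl⟩, hw1⟩ := h3
        simp only at hu1 hv1 hw1
        have hsum : t.1 + t.2.1 + t.2.2 = 0 := ht
        rw [← hu1, ← hv1, ← hw1] at hsum
        have hxy : x + y = 2 • z := by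
          have : x + y - 2 • z = 0 := by
            rw [sub_eq_add_neg]; exact hsum
          linear_combination (norm := abel) this
        obtain ⟨hxz, hyz⟩ := h3ap x hx z hz y hy hxy
        exact ⟨z, hz, Prod.ext (hu1.symm.trans hxz)
          (Prod.ext (hv1.symm.trans hyz) hw1.symm)⟩
      · rintro ⟨x, hx, rfl⟩
        refine ⟨?_, ⟨(x, x, -(2 • x)), ⟨x, hx, rfl⟩, rfl⟩,
          ⟨(x, x, -(2 • x)), ⟨x, hx, rfl⟩, rfl⟩, ⟨(x, x, -(2 • x)), ⟨x, hx, rfl⟩, rfl⟩⟩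
        show x + x + -(2 • x) = 0
        rw [two_nsmul]; abel
  refine ⟨hindep, ?_⟩
  have hcard : S'.ncard = S.ncard := by
    have himg : S' = (fun x : G => (x, x, -(2 • x))) '' S := by
      ext t
      simp only [hS', Set.mem_setOf_eq, Set.mem_image]
      constructor
      · rintro ⟨x, hx, rfl⟩; exact ⟨x, hx, rfl⟩
      · rintro ⟨x, hx, rfl⟩; exact ⟨x, hx, rfl⟩
    rw [himg]
    exact Set.ncard_image_of_injective S (fun a b hab => congrArg Prod.fst hab)
  rw [← hcard]
  apply le_csSup
  · refine ⟨(Set.univ : Set (G × G × G)).ncard, ?_⟩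
    rintro k ⟨T, _, rfl⟩
    exact Set.ncard_le_ncard (Set.subset_univ T) Set.finite_univ
  · exact ⟨S', hindep, rfl⟩
end
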